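/- For positive integers i, j, k, ℓ with i < j < k and 3 ≤ ℓ ≤ j - i + 2, the number of compositions of 2k + j into ℓ parts containing a part equal to k and a part equal to k + i is (ℓ² - ℓ) * C(j - i - 1, ℓ - 3). -/

import Mathlib

lemma finite_aux {α : Type*} [Fintype α] (n : ℕ) (P : (α → ℕ) → Prop) :
    Finite {x : α → ℕ // (∑ a, x a) = n ∧ P x} := by
  refine Finite.of_injective (fun x a => (⟨x.1 a, ?_⟩ : Fin (n+1))) ?_
  · have := Finset.single_le_sum (f := x.1) (fun i _ => Nat.zero_le _) (Finset.mem_univ a)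
    omega
  · intro x y h
    ext a
    exact congrArg Fin.val (congrFun h a)



section Split
variable {m n : ℕ}

lemma split_tail {x : Fin (m+1) → ℕ} (hs : (∑ a, x a) = n + 1) (hp : ∀ a, 0 < x a)
    (h : x 0 = 1) : (∑ a, Fin.tail x a) = n ∧ ∀ a, 0 < Fin.tail x a := by
  rw [Fin.sum_univ_succ, h] at hs
  refine ⟨?_, fun a => hp a.succ⟩
  simp only [Fin.tail]
  omega

lemma split_sub {x : Fin (m+1) → ℕ} (hs : (∑ a, x a) = n + 1) (hp : ∀ a, 0 < x a)
    (h : x 0 ≠ 1) :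
    (∑ a, Function.update x 0 (x 0 - 1) a) = n ∧ ∀ a, 0 < Function.update x 0 (x 0 - 1) a := by
  have h0 := hp 0
  have hs' : ∑ c ∈ Finset.univ.erase 0, x c + x 0 = n + 1 := by
    rw [Finset.sum_erase_add _ _ (Finset.mem_univ 0)]; exact hs
  constructor
  · rw [Finset.sum_update_of_mem (Finset.mem_univ 0)]
    simp only [Finset.sdiff_singleton_eq_erase]
    omega
  · intro a
    rcases eq_or_ne a 0 with rfl | ha
    · simp only [Function.update_self]; omega
    · rw [Function.update_of_ne ha]; exact hp a

lemma split_cons {y : Fin m → ℕ} (hs : (∑ a, y a) = n) (hp : ∀ a, 0 < y a) :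
    (∑ a, (Fin.cons 1 y : Fin (m+1) → ℕ) a) = n + 1 ∧ ∀ a, 0 < (Fin.cons 1 y : Fin (m+1) → ℕ) a := by
  refine ⟨by rw [Fin.sum_univ_succ]; simp [hs, Nat.add_comm], ?_⟩
  intro a
  rcases Fin.eq_zero_or_eq_succ a with rfl | ⟨b, rfl⟩
  · simp
  · simp [hp b]

lemma split_add {y : Fin (m+1) → ℕ} (hs : (∑ a, y a) = n) (hp : ∀ a, 0 < y a) :
    (∑ a, Function.update y 0 (y 0 + 1) a) = n + 1 ∧ ∀ a, 0 < Function.update y 0 (y 0 + 1) a := by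
  have hs' : ∑ c ∈ Finset.univ.erase 0, y c + y 0 = n := by
    rw [Finset.sum_erase_add _ _ (Finset.mem_univ 0)]; exact hs
  constructor
  · rw [Finset.sum_update_of_mem (Finset.mem_univ 0)]
    simp only [Finset.sdiff_singleton_eq_erase]
    omega
  · intro a
    rcases eq_or_ne a 0 with rfl | ha
    · simp
    · rw [Function.update_of_ne ha]; exact hp a

def splitEquiv (m n : ℕ) :
    {x : Fin (m+1) → ℕ // (∑ a, x a) = n + 1 ∧ ∀ a, 0 < x a} ≃
    ({y : Fin m → ℕ // (∑ a, y a) = n ∧ ∀ a, 0 < y a} ⊕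
     {y : Fin (m+1) → ℕ // (∑ a, y a) = n ∧ ∀ a, 0 < y a}) where
  toFun x :=
    if h : x.1 0 = 1 then Sum.inl ⟨Fin.tail x.1, split_tail x.2.1 x.2.2 h⟩
    else Sum.inr ⟨Function.update x.1 0 (x.1 0 - 1), split_sub x.2.1 x.2.2 h⟩
  invFun y :=
    Sum.elim (fun y => ⟨Fin.cons 1 y.1, split_cons y.2.1 y.2.2⟩)
      (fun y => ⟨Function.update y.1 0 (y.1 0 + 1), split_add y.2.1 y.2.2⟩) y
  left_inv x := by
    rcases x with ⟨x, hs, hp⟩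
    by_cases h : x 0 = 1
    · simp only [dif_pos h, Sum.elim_inl]
      apply Subtype.ext
      simp only []
      conv_rhs => rw [← Fin.cons_self_tail x]
      rw [h]
    · simp only [dif_neg h, Sum.elim_inr]
      apply Subtype.ext
      simp only [Function.update_self, Function.update_idem]
      have h0 := hp 0
      have : x 0 - 1 + 1 = x 0 := by omega
      rw [this, Function.update_eq_self]
  right_inv y := by
    rcases y with ⟨y, hs, hp⟩ | ⟨y, hs, hp⟩
    · simp only [Sum.elim_inl]
      simp only [Fin.cons_zero, eq_self_iff_true, dite_true]
      congr 1
    · simp only [Sum.elim_inr]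
      have h0 := hp 0
      simp only [Function.update_self, show ¬ (y 0 + 1 = 1) by omega, dite_false]
      congr 1
      apply Subtype.ext
      simp only [Function.update_self, Function.update_idem, Nat.add_sub_cancel,
        Function.update_eq_self]

end Split

lemma card_comp : ∀ (n m : ℕ),
    Nat.card {x : Fin (m+1) → ℕ // (∑ a, x a) = n + 1 ∧ ∀ a, 0 < x a} = n.choose m
  | n, 0 => by
    haveI : Unique {x : Fin 1 → ℕ // (∑ a, x a) = n + 1 ∧ ∀ a, 0 < x a} := by
      refine ⟨⟨⟨fun _ => n + 1, by simp, fun _ => Nat.succ_pos _⟩⟩, ?_⟩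
      rintro ⟨x, hs, hp⟩
      apply Subtype.ext
      funext a
      have ha : a = 0 := Fin.eq_zero a
      subst ha
      simpa using hs
    rw [Nat.choose_zero_right]
    exact Nat.card_unique
  | 0, m + 1 => by
    haveI : IsEmpty {x : Fin (m+2) → ℕ // (∑ a, x a) = 0 + 1 ∧ ∀ a, 0 < x a} := by
      refine ⟨?_⟩
      rintro ⟨x, hs, hp⟩
      have h1 : (Finset.univ : Finset (Fin (m+2))).card • 1 ≤ ∑ a, x a :=
        Finset.card_nsmul_le_sum _ _ _ (fun i _ => hp i)
      simp only [Finset.card_univ, Fintype.card_fin, smul_eq_mul, mul_one, hs] at h1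
      omega
    simp [Nat.card_of_isEmpty, Nat.choose_succ_succ]
  | n + 1, m + 1 => by
    haveI := finite_aux (n + 1) (fun x : Fin (m+1) → ℕ => ∀ a, 0 < x a)
    haveI := finite_aux (n + 1) (fun x : Fin (m+2) → ℕ => ∀ a, 0 < x a)
    rw [Nat.card_congr (splitEquiv (m+1) (n+1)), Nat.card_sum, card_comp n m,
      card_comp n (m+1), Nat.choose_succ_succ]

def compEquiv {α β : Type*} [Fintype α] [Fintype β] (e : α ≃ β) (N : ℕ) :
    {y : α → ℕ // (∑ c, y c) = N ∧ ∀ c, 0 < y c} ≃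
    {y : β → ℕ // (∑ c, y c) = N ∧ ∀ c, 0 < y c} :=
  Equiv.subtypeEquiv (Equiv.arrowCongr e (Equiv.refl ℕ)) (by
    intro x
    simp only [Equiv.arrowCongr_apply, Equiv.coe_refl, Function.comp, id]
    constructor
    · rintro ⟨hs, hp⟩
      refine ⟨?_, fun b => hp _⟩
      rw [Equiv.sum_comp e.symm x]
      exact hs
    · rintro ⟨hs, hp⟩
      refine ⟨?_, fun a => by simpa using hp (e a)⟩
      rw [Equiv.sum_comp e.symm x] at hs
      exact hs)

lemma card_comp' {α : Type*} [Fintype α] (hα : 0 < Fintype.card α) (N : ℕ) (hN : 0 < N) :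
    Nat.card {x : α → ℕ // (∑ a, x a) = N ∧ ∀ a, 0 < x a} =
      (N - 1).choose (Fintype.card α - 1) := by
  obtain ⟨m, hm⟩ : ∃ m, Fintype.card α = m + 1 := ⟨_, (Nat.succ_pred_eq_of_pos hα).symm⟩
  obtain ⟨n, rfl⟩ : ∃ n, N = n + 1 := ⟨N - 1, by omega⟩
  rw [Nat.card_congr (compEquiv (Fintype.equivFinOfCardEq hm) (n+1)), card_comp n m]
  simp [hm]

section Insert
variable {ℓ : ℕ}

lemma sum_split (a b : Fin ℓ) (hab : a ≠ b) (x : Fin ℓ → ℕ) :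
    (∑ c, x c) = x a + x b + ∑ c ∈ Finset.univ \ {a, b}, x c := by
  rw [← Finset.sum_sdiff (Finset.subset_univ {a, b}), Finset.sum_pair hab]
  ring

lemma sum_subtype_eq (a b : Fin ℓ) (x : Fin ℓ → ℕ) :
    (∑ c : {c : Fin ℓ // c ≠ a ∧ c ≠ b}, x c.1) = ∑ c ∈ Finset.univ \ {a, b}, x c := by
  rw [Finset.sum_subtype (p := fun c => c ≠ a ∧ c ≠ b) (Finset.univ \ {a, b}) (by simp) x]

def insertEquiv (a b : Fin ℓ) (hab : a ≠ b) (u v N : ℕ) (hu : 0 < u) (hv : 0 < v) :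
    {x : Fin ℓ → ℕ // (∑ c, x c) = u + v + N ∧ (∀ c, 0 < x c) ∧ x a = u ∧ x b = v} ≃
    {y : {c : Fin ℓ // c ≠ a ∧ c ≠ b} → ℕ // (∑ c, y c) = N ∧ ∀ c, 0 < y c} where
  toFun x := ⟨fun c => x.1 c.1, by
    obtain ⟨hs, hp, hxa, hxb⟩ := x.2
    refine ⟨?_, fun c => hp c.1⟩
    rw [sum_subtype_eq a b]
    rw [sum_split a b hab, hxa, hxb] at hs
    omega⟩
  invFun y := ⟨fun c => if h1 : c = a then u else if h2 : c = b then v else y.1 ⟨c, h1, h2⟩, by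
    obtain ⟨hs, hp⟩ := y.2
    refine ⟨?_, ?_, by beta_reduce; rw [dif_pos rfl], by beta_reduce; rw [dif_neg (Ne.symm hab), dif_pos rfl]⟩
    · rw [sum_split a b hab _]
      rw [dif_pos rfl, dif_neg (Ne.symm hab), dif_pos rfl,
        ← sum_subtype_eq a b]
      have : (∑ c : {c : Fin ℓ // c ≠ a ∧ c ≠ b},
          (if h1 : c.1 = a then u else if h2 : c.1 = b then v else y.1 ⟨c.1, h1, h2⟩)) =
          ∑ c, y.1 c :=
        Finset.sum_congr rfl (fun c _ => by rw [dif_neg c.2.1, dif_neg c.2.2])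
      rw [this, hs]
    · intro c
      beta_reduce
      rcases eq_or_ne c a with rfl | h1
      · rw [dif_pos rfl]; exact hu
      rcases eq_or_ne c b with rfl | h2
      · rw [dif_neg h1, dif_pos rfl]; exact hv
      · rw [dif_neg h1, dif_neg h2]; exact hp _⟩
  left_inv x := by
    obtain ⟨x, hs, hp, hxa, hxb⟩ := x
    apply Subtype.ext
    funext c
    simp only []
    rcases eq_or_ne c a with rfl | h1
    · rw [dif_pos rfl, hxa]
    rcases eq_or_ne c b with rfl | h2
    · rw [dif_neg h1, dif_pos rfl, hxb]
    · rw [dif_neg h1, dif_neg h2]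
  right_inv y := by
    apply Subtype.ext
    funext c
    obtain ⟨c, h1, h2⟩ := c
    simp only []
    rw [dif_neg h1, dif_neg h2]

end Insert

lemma sigma_mk_eq {I : Type*} {α : Type*} {P : I → α → Prop} {i j : I} {x : {a : α // P i a}}
    {y : {a : α // P j a}} (h : i = j) (h2 : x.1 = y.1) :
    (⟨i, x⟩ : Σ i, {a : α // P i a}) = ⟨j, y⟩ := by
  subst h
  exact congrArg _ (Subtype.ext h2)

lemma three_le {ℓ : ℕ} (x : Fin ℓ → ℕ) {a a' b : Fin ℓ} (h1 : a ≠ a') (h2 : b ≠ a)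
    (h3 : b ≠ a') : x a + x a' + x b ≤ ∑ c, x c := by
  have e1 : x a + x a' + x b = ∑ c ∈ ({a, a', b} : Finset (Fin ℓ)), x c := by
    rw [Finset.sum_insert (by simp [h1, h2.symm]), Finset.sum_insert (by simp [h3.symm]),
      Finset.sum_singleton, Nat.add_assoc]
  rw [e1]
  exact Finset.sum_le_sum_of_subset (Finset.subset_univ _)

def posEquiv {ℓ : ℕ} (u v T : ℕ) (huv : u ≠ v)
    (huniq : ∀ x : Fin ℓ → ℕ, (∑ c, x c) = T → (∀ c, 0 < x c) → (∃ b, x b = v) →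
      ∀ a a', x a = u → x a' = u → a = a')
    (hvniq : ∀ x : Fin ℓ → ℕ, (∑ c, x c) = T → (∀ c, 0 < x c) → (∃ a, x a = u) →
      ∀ b b', x b = v → x b' = v → b = b') :
    {x : Fin ℓ → ℕ // (∑ c, x c) = T ∧ (∀ c, 0 < x c) ∧ (∃ a, x a = u) ∧ ∃ b, x b = v} ≃
    Σ p : {p : Fin ℓ × Fin ℓ // p.1 ≠ p.2},
      {x : Fin ℓ → ℕ // (∑ c, x c) = T ∧ (∀ c, 0 < x c) ∧ x p.1.1 = u ∧ x p.1.2 = v} where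
  toFun x :=
    let A := Fintype.chooseX (fun a => x.1 a = u)
      (by
        obtain ⟨hs, hp, ⟨a, ha⟩, hb⟩ := x.2
        exact ⟨a, ha, fun a' h' => huniq x.1 hs hp hb a' a h' ha⟩)
    let B := Fintype.chooseX (fun b => x.1 b = v)
      (by
        obtain ⟨hs, hp, ha, ⟨b, hb⟩⟩ := x.2
        exact ⟨b, hb, fun b' h' => hvniq x.1 hs hp ha b' b h' hb⟩)
    ⟨⟨(A.1, B.1), by
        intro h
        apply huv
        have hA : x.1 A.1 = u := A.2
        have hB : x.1 B.1 = v := B.2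
        rw [show A.1 = B.1 from h] at hA
        rw [← hA, hB]⟩,
     ⟨x.1, x.2.1, x.2.2.1, A.2, B.2⟩⟩
  invFun y := ⟨y.2.1, y.2.2.1, y.2.2.2.1, ⟨y.1.1.1, y.2.2.2.2.1⟩, ⟨y.1.1.2, y.2.2.2.2.2⟩⟩
  left_inv x := Subtype.ext rfl
  right_inv y := by
    obtain ⟨⟨⟨pa, pb⟩, hpab⟩, x, hs, hp, hxa, hxb⟩ := y
    refine sigma_mk_eq (P := fun (p : {p : Fin ℓ × Fin ℓ // p.1 ≠ p.2}) (x : Fin ℓ → ℕ) =>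
      (∑ c, x c) = T ∧ (∀ c, 0 < x c) ∧ x p.1.1 = u ∧ x p.1.2 = v)
      (Subtype.ext (Prod.ext ?_ ?_)) rfl
    · have hg : ∀ A : {a : Fin ℓ // x a = u}, A.1 = pa :=
        fun A => huniq x hs hp ⟨pb, hxb⟩ A.1 pa A.2 hxa
      exact hg _
    · have hg : ∀ B : {b : Fin ℓ // x b = v}, B.1 = pb :=
        fun B => hvniq x hs hp ⟨pa, hxa⟩ B.1 pb B.2 hxb
      exact hg _

def diagEquiv (ℓ : ℕ) : {p : Fin ℓ × Fin ℓ // p.1 = p.2} ≃ Fin ℓ where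
  toFun p := p.1.1
  invFun a := ⟨(a, a), rfl⟩
  left_inv p := Subtype.ext (Prod.ext rfl p.2)
  right_inv a := rfl

lemma card_ne_pairs (ℓ : ℕ) : Nat.card {p : Fin ℓ × Fin ℓ // p.1 ≠ p.2} = ℓ ^ 2 - ℓ := by
  rw [Nat.card_eq_fintype_card]
  have h1 : Fintype.card {p : Fin ℓ × Fin ℓ // p.1 ≠ p.2} =
      Fintype.card (Fin ℓ × Fin ℓ) - Fintype.card {p : Fin ℓ × Fin ℓ // p.1 = p.2} :=
    Fintype.card_subtype_compl (fun p : Fin ℓ × Fin ℓ => p.1 = p.2)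
  rw [h1, Fintype.card_congr (diagEquiv ℓ), Fintype.card_prod, Fintype.card_fin, pow_two]

lemma card_ne_two {ℓ : ℕ} (a b : Fin ℓ) (hab : a ≠ b) :
    Fintype.card {c : Fin ℓ // c ≠ a ∧ c ≠ b} = ℓ - 2 := by
  rw [Fintype.card_subtype]
  have : Finset.univ.filter (fun c : Fin ℓ => c ≠ a ∧ c ≠ b) = Finset.univ \ {a, b} := by
    ext c
    simp [not_or]
  rw [this, Finset.card_sdiff_of_subset (Finset.subset_univ _), Finset.card_pair hab, Finset.card_univ,
    Fintype.card_fin]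

/-- Compositions of `2k + j` into `ℓ` parts containing a part `k` and a part `k + i`. -/
theorem stmt_7 (i j k ℓ : ℕ) (hi : 0 < i) (hij : i < j) (hjk : j < k)
    (h3 : 3 ≤ ℓ) (h4 : ℓ ≤ j - i + 2) :
    Nat.card {x : Fin ℓ → ℕ // (∑ a, x a) = 2 * k + j ∧ (∀ a, 0 < x a) ∧
        (∃ a, x a = k) ∧ ∃ b, x b = k + i}
      = (ℓ ^ 2 - ℓ) * Nat.choose (j - i - 1) (ℓ - 3) := by
  rw [show 2 * k + j = k + (k + i) + (j - i) from by omega]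
  have huniq : ∀ x : Fin ℓ → ℕ, (∑ c, x c) = k + (k + i) + (j - i) → (∀ c, 0 < x c) →
      (∃ b, x b = k + i) → ∀ a a', x a = k → x a' = k → a = a' := by
    rintro x hs hp ⟨b, hb⟩ a a' ha ha'
    by_contra hne
    have hba : b ≠ a := by intro h; rw [h, ha] at hb; omega
    have hba' : b ≠ a' := by intro h; rw [h, ha'] at hb; omega
    have hle := three_le x hne hba hba'
    rw [ha, ha', hb, hs] at hle
    omega
  have hvniq : ∀ x : Fin ℓ → ℕ, (∑ c, x c) = k + (k + i) + (j - i) → (∀ c, 0 < x c) →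
      (∃ a, x a = k) → ∀ b b', x b = k + i → x b' = k + i → b = b' := by
    rintro x hs hp ⟨a, ha⟩ b b' hb hb'
    by_contra hne
    have hab : a ≠ b := by intro h; rw [h, hb] at ha; omega
    have hab' : a ≠ b' := by intro h; rw [h, hb'] at ha; omega
    have hle := three_le x hne hab hab'
    rw [hb, hb', ha, hs] at hle
    omega
  rw [Nat.card_congr ((posEquiv k (k + i) (k + (k + i) + (j - i)) (by omega) huniq
    hvniq).trans ((Equiv.sigmaCongrRight (fun (p : {p : Fin ℓ × Fin ℓ // p.1 ≠ p.2}) =>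
      (insertEquiv p.1.1 p.1.2 p.2 k (k + i) (j - i) (by omega) (by omega)).trans
        (compEquiv (Fintype.equivFinOfCardEq (card_ne_two p.1.1 p.1.2 p.2)) (j - i)))).trans
          (Equiv.sigmaEquivProd _ _)))]
  rw [Nat.card_prod, card_ne_pairs]
  congr 1
  rw [card_comp' (by simp; omega) (j - i) (by omega)]
  rw [Fintype.card_fin]
  congr 1
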